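/- Let k ≥ 4 be even and let π be a pair-partition of {1,...,k} containing a block {m, m+1}. Then, as N → ∞, #P_N^{-1}(π) ≤ N · #P_N^{-1}(π̃) + o(N^{1+k/2}), where π̃ = π ∖• {m,m+1} is the induced pair-partition of {1,...,k−2}. -/

import Mathlib

open MeasureTheory Filter Asymptotics ProbabilityTheory
open scoped Classical

/-- Cyclic addition on `Fin k` (indices of `{1,…,k}` understood cyclically). -/
def cycAdd {k : ℕ} (m : Fin k) (a : ℕ) : Fin k :=
  ⟨(m.val + a) % k, Nat.mod_lt _ m.pos⟩

/-- Cyclic successor on `Fin k` (`k + 1 := 1`). -/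
def cycSucc {k : ℕ} (m : Fin k) : Fin k := cycAdd m 1

/-- A pair-partition of `{1,…,k}`, encoded as a fixed-point free involution:
the blocks are the sets `{i, pair i}`. -/
structure PairPartition (k : ℕ) where
  pair : Fin k → Fin k
  involutive : ∀ i, pair (pair i) = i
  pair_ne : ∀ i, pair i ≠ i

namespace PairPartition

/-- A pair-partition is crossing if there are `a < b < c < d` such that
`{a,c}` and `{b,d}` are blocks. -/
def Crossing {k : ℕ} (π : PairPartition k) : Prop :=
  ∃ a b c d : Fin k, a < b ∧ b < c ∧ c < d ∧ π.pair a = c ∧ π.pair b = d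

/-- Non-crossing pair-partitions. -/
def NonCrossing {k : ℕ} (π : PairPartition k) : Prop := ¬ π.Crossing

noncomputable instance {k : ℕ} : Fintype (PairPartition k) :=
  Fintype.ofInjective PairPartition.pair (fun a b h => by
    cases a; cases b; simpa using h)

end PairPartition

/-- The increasing embedding `Fin (k-2) → Fin k` which misses the two positions
`m`, `m+1` (0-based). -/
def skip2 {k : ℕ} (m : ℕ) (j : Fin (k - 2)) : Fin k :=
  if j.val < m then ⟨j.val, by have := j.isLt; omega⟩
  else ⟨j.val + 2, by have := j.isLt; omega⟩

/-- The embedding `Fin (k-2) → Fin k` which misses the two cyclic positions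
`m+1`, `m+2` (0-based). -/
def seqSkip {k : ℕ} (m : ℕ) (j : Fin (k - 2)) : Fin k :=
  if m + 2 < k then
    (if j.val ≤ m then ⟨j.val, by have := j.isLt; omega⟩
     else ⟨j.val + 2, by have := j.isLt; omega⟩)
  else ⟨j.val + 1, by have := j.isLt; omega⟩

/-- `π ∖• {m, m+1}` (0-based: the block `{m, m+1}` is removed and indices `> m+1`
are relabelled by `a ↦ a - 2`), on the level of pairing functions. -/
def delPairFun {k : ℕ} (p : Fin k → Fin k) (m : ℕ) : Fin (k - 2) → Fin (k - 2) :=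
  fun j =>
    ⟨(if (p (skip2 m j)).val < m then (p (skip2 m j)).val
      else (p (skip2 m j)).val - 2) % (k - 2), Nat.mod_lt _ j.pos⟩

/-- `π`-adopted sequences (with `π` a pair-partition of `{1,…,k}` given by its pairing
function `p`), defined recursively:  for `k = 2` exactly the sequences `(g, h)` with
`g ≠ h` are adopted; for `k > 2` it is required that for every (0-based) block
`{m, m+1}` of `π` one has `g m = g (m+2)` (cyclically), `g s ≠ g (m+1)` for all
`s ≠ m+1`, and that the sequence obtained by deleting the entries at the (cyclic)
positions `m+1`, `m+2` is `π ∖• {m, m+1}`-adopted. -/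
inductive IsAdoptedFun {G : Type*} : {k : ℕ} → (Fin k → Fin k) → (Fin k → G) → Prop where
  | base (p : Fin 2 → Fin 2) (g : Fin 2 → G) (h : g 0 ≠ g 1) : IsAdoptedFun p g
  | step {k : ℕ} (hk : 4 ≤ k) (p : Fin k → Fin k) (g : Fin k → G)
      (h1 : ∀ (m : ℕ) (hm : m + 1 < k), (p ⟨m, by omega⟩).val = m + 1 →
        g ⟨m, by omega⟩ = g ⟨(m + 2) % k, Nat.mod_lt _ (by omega)⟩)
      (h2 : ∀ (m : ℕ) (hm : m + 1 < k), (p ⟨m, by omega⟩).val = m + 1 →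
        ∀ s : Fin k, s ≠ ⟨m + 1, hm⟩ → g s ≠ g ⟨m + 1, hm⟩)
      (h3 : ∀ (m : ℕ) (hm : m + 1 < k), (p ⟨m, by omega⟩).val = m + 1 →
        IsAdoptedFun (delPairFun p m) (fun j => g (seqSkip m j))) :
      IsAdoptedFun p g

/-- `π`-adopted sequences for a pair-partition `π`. -/
def PairPartition.IsAdopted {G : Type*} {k : ℕ} (π : PairPartition k) (g : Fin k → G) : Prop :=
  IsAdoptedFun π.pair g

/-- The integral `∫_{[0,1]^n} ∏_{edges {a,b} of the graph traversed by `Gs`}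
`α(|x_a - x_b|)²`, where the edges are `{Gs m, Gs (m+1)}` (cyclically). -/
noncomputable def JwithSeq (α : ℝ → ℝ) {k n : ℕ} (Gs : Fin k → Fin n) : ℝ :=
  ∫ x in (Set.univ.pi fun _ : Fin n => Set.Icc (0:ℝ) 1),
    ∏ e ∈ Finset.image (fun m : Fin k => s(Gs m, Gs (cycSucc m))) Finset.univ,
      Sym2.lift ⟨fun a b => α |x a - x b| ^ 2, fun a b => by simp only [abs_sub_comm (x a) (x b)]⟩ e

/-- The `α²`-integral `J_α(π)` over the `π`-adopted graph (rooted tree) of a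
non-crossing pair-partition `π` of `{1,…,k}` (given by its pairing function):
the adopted sequence has exactly `k/2 + 1` distinct nodes, so we realize it as a
surjection onto `Fin (k/2+1)`; the integral does not depend on this choice. -/
noncomputable def Jfun (α : ℝ → ℝ) {k : ℕ} (p : Fin k → Fin k) : ℝ :=
  if h : ∃ Gs : Fin k → Fin (k / 2 + 1), Function.Surjective Gs ∧ IsAdoptedFun p Gs then
    JwithSeq α h.choose
  else 0

/-- `P_N^{-1}(π)` for a pair-partition `π` (given by its pairing function `p`): the set of
tuples `(i_1, …, i_k) ∈ {1,…,N}^k` such that `(i_l, i_{l+1}) ∼ (i_m, i_{m+1})` holds iff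
`l` and `m` lie in the same block of `π` (indices cyclic). -/
def PinvPair {k N : ℕ} (E : Fin N × Fin N → Fin N × Fin N → Prop) (p : Fin k → Fin k) :
    Set (Fin k → Fin N) :=
  {i | ∀ l m : Fin k, E (i l, i (cycSucc l)) (i m, i (cycSucc m)) ↔ (l = m ∨ p l = m)}

/-- `P_N^{-1}(π)` for a general partition `π` of `{1,…,k}`. -/
def PinvPartition {k N : ℕ} (E : Fin N × Fin N → Fin N × Fin N → Prop)
    (π : Finpartition (Finset.univ : Finset (Fin k))) : Set (Fin k → Fin N) :=
  {i | ∀ l m : Fin k, E (i l, i (cycSucc l)) (i m, i (cycSucc m)) ↔ ∃ b ∈ π.parts, l ∈ b ∧ m ∈ b}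

/-- `Π_N^{-1}(π)`: the members of `P_N^{-1}(π)` which are not `π`-adopted sequences. -/
def PinvNA {k N : ℕ} (E : Fin N × Fin N → Fin N × Fin N → Prop) (p : Fin k → Fin k) :
    Set (Fin k → Fin N) :=
  {i | i ∈ PinvPair E p ∧ ¬ IsAdoptedFun p i}

/-- The quantity from condition (C1): `max_p #{(q,r,s) : (p,q) ∼ (r,s)}`. -/
noncomputable def cond1Count {N : ℕ} (E : Fin N × Fin N → Fin N × Fin N → Prop) : ℕ :=
  Finset.univ.sup fun p : Fin N =>
    ({qrs : Fin N × Fin N × Fin N | E (p, qrs.1) (qrs.2.1, qrs.2.2)}).ncard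

/-- The quantity from condition (C3): `#{(p,q,r) : (p,q) ∼ (q,r), r ≠ p}`. -/
noncomputable def cond3Count {N : ℕ} (E : Fin N × Fin N → Fin N × Fin N → Prop) : ℕ :=
  ({pqr : Fin N × Fin N × Fin N | E (pqr.1, pqr.2.1) (pqr.2.1, pqr.2.2) ∧ pqr.2.2 ≠ pqr.1}).ncard

/-- Condition (C2): `#{s : (p,q) ∼ (r,s)} ≤ B` for all `p, q, r`. -/
def cond2 {N : ℕ} (E : Fin N × Fin N → Fin N × Fin N → Prop) (B : ℕ) : Prop :=
  ∀ p q r : Fin N, ({s : Fin N | E (p, q) (r, s)}).ncard ≤ B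

/-- Independence of the sub-families of `(X_{pq})` indexed by the equivalence classes
of `∼`. -/
def IndepClasses {Ω : Type*} [MeasureSpace Ω] {N : ℕ}
    (E : Fin N × Fin N → Fin N × Fin N → Prop) (hE : Equivalence E)
    (X : Fin N → Fin N → Ω → ℝ) : Prop :=
  iIndepFun
    (fun c : Quotient (Setoid.mk E hE) =>
      fun ω => fun p : {p : Fin N × Fin N // Quotient.mk (Setoid.mk E hE) p = c} =>
        X p.1.1 p.1.2 ω) volume

/-- The Catalan number `C_k = binom(2k, k)/(k+1)` as a real number. -/
noncomputable def catalanReal (j : ℕ) : ℝ := (Nat.choose (2 * j) j : ℝ) / (j + 1)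

/-- The integral defining `J_α` over the graph traversed by `Gs`, in which the variable
attached to the node `g0` is fixed equal to `t` and only the remaining variables are
integrated over `[0,1]`. -/
noncomputable def JpartSeq (α : ℝ → ℝ) {k n : ℕ} (Gs : Fin k → Fin n) (g0 : Fin n) (t : ℝ) : ℝ :=
  ∫ y in (Set.univ.pi fun _ : {i : Fin n // i ≠ g0} => Set.Icc (0:ℝ) 1),
    ∏ e ∈ Finset.image (fun m : Fin k => s(Gs m, Gs (cycSucc m))) Finset.univ,
      Sym2.lift ⟨fun a b =>
          α |(fun i : Fin n => if h : i = g0 then t else y ⟨i, h⟩) a -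
             (fun i : Fin n => if h : i = g0 then t else y ⟨i, h⟩) b| ^ 2,
        fun a b => by
          simp only [abs_sub_comm ((fun i : Fin n => if h : i = g0 then t else y ⟨i, h⟩) a)
            ((fun i : Fin n => if h : i = g0 then t else y ⟨i, h⟩) b)]⟩ e

/-! Split `P_N^{-1}(π)` according to whether `i_m = i_{m+2}`. If so, cutting the entries at
`m, m+1` out of `i` yields an element of `P_N^{-1}(π̃)`, and `i` is recovered from it and
`i_{m+1}`: at most `N · #P_N^{-1}(π̃)` sequences. Otherwise `(i_m, i_{m+1}, i_{m+2})` is one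
of the `o(N²)` triples of (C3), and given that triple `i` is read off cyclically from `m`: an
entry closing a block has at most `B` possible values by (C2), an entry opening one at most `N`,
and only `k/2 - 1` blocks are left to open. -/

open Finset

section Cyclic

variable {k : ℕ}

def cycOffset (M t : Fin k) : ℕ := (t.val + (k - M.val)) % k

lemma cycOffset_lt (M t : Fin k) : cycOffset M t < k := Nat.mod_lt _ M.pos

lemma cycAdd_cycOffset (M t : Fin k) : cycAdd M (cycOffset M t) = t := by
  apply Fin.ext
  change (M.val + (t.val + (k - M.val)) % k) % k = t.val
  rw [Nat.add_mod_mod, show M.val + (t.val + (k - M.val)) = t.val + k by omega,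
    Nat.add_mod_right, Nat.mod_eq_of_lt t.isLt]

lemma cycOffset_cycAdd (M : Fin k) {a : ℕ} (ha : a < k) : cycOffset M (cycAdd M a) = a := by
  change ((M.val + a) % k + (k - M.val)) % k = a
  rw [Nat.mod_add_mod, show M.val + a + (k - M.val) = a + k by omega, Nat.add_mod_right,
    Nat.mod_eq_of_lt ha]

lemma cycAdd_zero (M : Fin k) : cycAdd M 0 = M :=
  Fin.ext (Nat.mod_eq_of_lt M.isLt)

lemma cycSucc_cycAdd (M : Fin k) (a : ℕ) : cycSucc (cycAdd M a) = cycAdd M (a + 1) :=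
  Fin.ext (Nat.mod_add_mod _ _ _)

def rotPair (p : Fin k → Fin k) (M : Fin k) (s : ℕ) : ℕ := cycOffset M (p (cycAdd M s))

variable {p : Fin k → Fin k} {M : Fin k}

lemma cycAdd_rotPair (s : ℕ) : cycAdd M (rotPair p M s) = p (cycAdd M s) :=
  cycAdd_cycOffset M _

lemma rotPair_rotPair (hinv : ∀ t, p (p t) = t) {s : ℕ} (hs : s < k) :
    rotPair p M (rotPair p M s) = s := by
  rw [rotPair, cycAdd_rotPair, hinv, cycOffset_cycAdd M hs]

lemma rotPair_ne (hne : ∀ t, p t ≠ t) (s : ℕ) : rotPair p M s ≠ s := fun h =>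
  hne (cycAdd M s) (by rw [← cycAdd_rotPair (p := p) s, h])

end Cyclic

lemma two_mul_card_filter_lt_le {k : ℕ} (σ : ℕ → ℕ) (hlt : ∀ s < k, σ s < k)
    (hσ : ∀ s < k, σ (σ s) = s) : 2 * #{s ∈ range k | s < σ s} ≤ k := by
  set A := {s ∈ range k | s < σ s}
  have hinj : Set.InjOn σ A := fun s hs t ht h => by
    simp only [A, coe_filter, mem_range, Set.mem_ofPred_eq] at hs ht
    rw [← hσ s hs.1, ← hσ t ht.1, h]
  have hsub : A ∪ A.image σ ⊆ range k := by
    intro s hs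
    simp only [A, mem_union, mem_image, mem_filter, mem_range] at hs ⊢
    rcases hs with h | ⟨t, ht, rfl⟩
    exacts [h.1, hlt t ht.1]
  have hdisj : Disjoint A (A.image σ) := by
    simp only [A, disjoint_left, mem_image, mem_filter, mem_range]
    rintro _ ⟨-, hlt'⟩ ⟨t, ⟨ht, hts⟩, rfl⟩
    rw [hσ t ht] at hlt'
    omega
  have hcard := card_le_card hsub
  rw [card_union_of_disjoint hdisj, card_image_of_injOn hinj, card_range] at hcard
  omega

lemma prod_ite_lt_le_pow_mul_pow {k B N : ℕ} (hk : 0 < k) (σ : ℕ → ℕ)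
    (hlt : ∀ s < k, σ s < k) (hσ : ∀ s < k, σ (σ s) = s) (hne : ∀ s, σ s ≠ s)
    (h0 : σ 0 = 1) (hB : 1 ≤ B) (hN : 1 ≤ N) :
    ∏ r ∈ Ico 3 k, (if σ (r - 1) < r - 1 then B else N) ≤ B ^ k * N ^ (k / 2 - 1) := by
  set C : Finset ℕ := {r ∈ Ico 3 k | ¬σ (r - 1) < r - 1}
  set A : Finset ℕ := {s ∈ range k | s < σ s}
  have hopeners : #C ≤ k / 2 - 1 := by
    have h0A : 0 ∈ A := by simp [A, h0]; omega
    have hmaps : Set.MapsTo (· - 1) C (A.erase 0) := by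
      intro r hr
      have := hne (r - 1)
      simp only [C, A, coe_filter, coe_erase, mem_Ico, mem_range, Set.mem_ofPred_eq,
        Set.mem_sdiff, Set.mem_singleton_iff] at hr ⊢
      omega
    have hinj : Set.InjOn (· - 1) C := by
      intro r hr r' hr' h
      simp only [C, coe_filter, mem_Ico, Set.mem_ofPred_eq] at hr hr' h
      omega
    have hA : 2 * #A ≤ k := two_mul_card_filter_lt_le σ hlt hσ
    have hC := card_le_card_of_injOn _ hmaps hinj
    rw [card_erase_of_mem h0A] at hC
    omega
  rw [prod_ite, prod_const, prod_const]
  gcongr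
  exact card_filter_le _ _ |>.trans (by simp)

section Prefix

variable {k : ℕ} {α : Type*} (M : Fin k)

def cycPrefix (r : ℕ) (i : Fin k → α) : Fin r → α := fun j => i (cycAdd M j)

lemma cycPrefix_injective : Function.Injective (cycPrefix (α := α) M k) := fun i i' h =>
  funext fun t => by
    simpa [cycPrefix, cycAdd_cycOffset] using congrFun h ⟨cycOffset M t, cycOffset_lt M t⟩

variable [DecidableEq α]

lemma card_image_cycPrefix_succ_le (S : Finset (Fin k → α)) (r c : ℕ)
    (hext : ∀ a ∈ S.image (cycPrefix M r),
      #({i ∈ S | cycPrefix M r i = a}.image fun i => i (cycAdd M r)) ≤ c) :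
    #(S.image (cycPrefix M (r + 1))) ≤ c * #(S.image (cycPrefix M r)) := by
  have hinit : (S.image (cycPrefix M (r + 1))).image Fin.init = S.image (cycPrefix M r) := by
    rw [image_image]; rfl
  rw [← hinit]
  refine card_le_mul_card_image _ c fun a ha => ?_
  rw [hinit] at ha
  refine le_trans (card_le_card_of_injOn (fun g => g (Fin.last r)) ?_ ?_) (hext a ha)
  · intro g hg
    simp only [coe_filter, mem_image, Set.mem_ofPred_eq] at hg
    obtain ⟨⟨i, hi, rfl⟩, hia⟩ := hg
    exact mem_coe.2 (mem_image.2 ⟨i, mem_filter.2 ⟨hi, hia⟩, rfl⟩)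
  · intro g hg g' hg' hlast
    rw [coe_filter, Set.mem_ofPred_eq] at hg hg'
    rw [← Fin.snoc_init_self g, ← Fin.snoc_init_self g', hg.2, hg'.2]
    exact congrArg _ hlast

lemma card_le_card_image_cycPrefix_mul_prod (S : Finset (Fin k → α)) {r₀ : ℕ}
    (hr₀ : r₀ ≤ k) (b : ℕ → ℕ)
    (hext : ∀ r ∈ Ico r₀ k, ∀ a ∈ S.image (cycPrefix M r),
      #({i ∈ S | cycPrefix M r i = a}.image fun i => i (cycAdd M r)) ≤ b r) :
    #S ≤ #(S.image (cycPrefix M r₀)) * ∏ r ∈ Ico r₀ k, b r := by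
  have key : ∀ r, r₀ ≤ r → r ≤ k →
      #(S.image (cycPrefix M r)) ≤ #(S.image (cycPrefix M r₀)) * ∏ j ∈ Ico r₀ r, b j := by
    intro r hr
    induction r, hr using Nat.le_induction with
    | base => simp
    | succ r hr ih =>
      intro hrk
      calc #(S.image (cycPrefix M (r + 1)))
          ≤ b r * #(S.image (cycPrefix M r)) :=
            card_image_cycPrefix_succ_le M S r (b r) (hext r (mem_Ico.2 ⟨hr, hrk⟩))
        _ ≤ b r * (#(S.image (cycPrefix M r₀)) * ∏ j ∈ Ico r₀ r, b j) := by
            gcongr; exact ih (by omega)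
        _ = _ := by rw [prod_Ico_succ_top hr]; ring
  rw [← card_image_of_injective S (cycPrefix_injective M)]
  exact key k hr₀ le_rfl

end Prefix

lemma card_filter_cond2_le {N B : ℕ} {E : Fin N × Fin N → Fin N × Fin N → Prop}
    (hC2 : cond2 E B) (p q r : Fin N) : #{s | E (p, q) (r, s)} ≤ B := by
  rw [← Set.ncard_coe_finset, coe_filter_univ]
  exact hC2 p q r

lemma rel_cycAdd_rotPair {k N : ℕ} {E : Fin N × Fin N → Fin N × Fin N → Prop}
    {p : Fin k → Fin k} {i : Fin k → Fin N}
    (hi : ∀ l, E (i l, i (cycSucc l)) (i (p l), i (cycSucc (p l)))) (M : Fin k) (s : ℕ) :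
    E (i (cycAdd M s), i (cycAdd M (s + 1)))
      (i (cycAdd M (rotPair p M s)), i (cycAdd M (rotPair p M s + 1))) := by
  simpa only [← cycAdd_rotPair (p := p), cycSucc_cycAdd] using hi (cycAdd M s)

lemma card_filter_pairing_le {k N B : ℕ} (hk : 3 ≤ k) (hB : 1 ≤ B)
    {E : Fin N × Fin N → Fin N × Fin N → Prop} (hC2 : cond2 E B)
    {p : Fin k → Fin k} (hinv : ∀ t, p (p t) = t) (hne : ∀ t, p t ≠ t)
    {M : Fin k} (hM : p M = cycAdd M 1) (x y z : Fin N) :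
    #{i : Fin k → Fin N | (∀ l, E (i l, i (cycSucc l)) (i (p l), i (cycSucc (p l)))) ∧
        i M = x ∧ i (cycAdd M 1) = y ∧ i (cycAdd M 2) = z} ≤ B ^ k * N ^ (k / 2 - 1) := by
  set σ := rotPair p M
  set S : Finset (Fin k → Fin N) :=
    {i | (∀ l, E (i l, i (cycSucc l)) (i (p l), i (cycSucc (p l)))) ∧
      i M = x ∧ i (cycAdd M 1) = y ∧ i (cycAdd M 2) = z}
  have hσ0 : σ 0 = 1 := by
    simp only [σ, rotPair, cycAdd_zero, hM, cycOffset_cycAdd M (by omega : 1 < k)]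
  have hprefix : #(S.image (cycPrefix M 3)) ≤ 1 := by
    refine card_le_one.2 ?_
    simp only [S, mem_image, mem_filter, mem_univ, true_and]
    rintro _ ⟨i, ⟨-, hx, hy, hz⟩, rfl⟩ _ ⟨i', ⟨-, hx', hy', hz'⟩, rfl⟩
    funext j
    fin_cases j
    · simp [cycPrefix, cycAdd_zero, hx, hx']
    · simp [cycPrefix, hy, hy']
    · simp [cycPrefix, hz, hz']
  have hext : ∀ r ∈ Ico 3 k, ∀ a ∈ S.image (cycPrefix M r),
      #({i ∈ S | cycPrefix M r i = a}.image fun i => i (cycAdd M r)) ≤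
        if σ (r - 1) < r - 1 then B else N := by
    intro r hr a _
    rw [mem_Ico] at hr
    split_ifs with hclose
    · refine le_trans (card_le_card ?_) (card_filter_cond2_le hC2
        (a ⟨σ (r - 1), by omega⟩) (a ⟨σ (r - 1) + 1, by omega⟩) (a ⟨r - 1, by omega⟩))
      simp only [S, subset_iff, mem_image, mem_filter, mem_univ, true_and]
      rintro _ ⟨i, ⟨⟨hi, -⟩, rfl⟩, rfl⟩
      have := rel_cycAdd_rotPair hi M (σ (r - 1))
      rwa [rotPair_rotPair hinv (by omega), Nat.sub_add_cancel (by omega)] at this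
    · exact (card_le_univ _).trans (Fintype.card_fin N).le
  calc #S ≤ #(S.image (cycPrefix M 3)) *
          ∏ r ∈ Ico 3 k, (if σ (r - 1) < r - 1 then B else N) :=
        card_le_card_image_cycPrefix_mul_prod M S (by omega) _ hext
    _ ≤ 1 * (B ^ k * N ^ (k / 2 - 1)) := by
        gcongr
        exact prod_ite_lt_le_pow_mul_pow (by omega) σ (fun s _ => cycOffset_lt _ _)
          (fun s hs => rotPair_rotPair hinv hs) (rotPair_ne hne) hσ0 hB x.pos
    _ = B ^ k * N ^ (k / 2 - 1) := one_mul _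

section Deletion

variable {k m : ℕ}

lemma skip2_val (j : Fin (k - 2)) :
    (skip2 (k := k) m j).val = if j.val < m then j.val else j.val + 2 := by
  unfold skip2; split_ifs <;> rfl

lemma skip2_injective : Function.Injective (skip2 (k := k) m) := fun a b h => by
  have h' := congrArg Fin.val h
  rw [skip2_val, skip2_val] at h'
  apply Fin.ext
  split_ifs at h' <;> omega

lemma skip2_val_ne (j : Fin (k - 2)) :
    (skip2 (k := k) m j).val ≠ m ∧ (skip2 (k := k) m j).val ≠ m + 1 := by
  rw [skip2_val]; split_ifs <;> omega

lemma exists_skip2_eq (hm : m + 1 < k) (t : Fin k) (h0 : t.val ≠ m) (h1 : t.val ≠ m + 1) :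
    ∃ j, skip2 (k := k) m j = t := by
  have := t.isLt
  by_cases ht : t.val < m
  · exact ⟨⟨t.val, by omega⟩, Fin.ext (by rw [skip2_val, if_pos ht])⟩
  · exact ⟨⟨t.val - 2, by omega⟩, Fin.ext (by simp only [skip2_val]; split_ifs <;> omega)⟩

lemma mod_eq_ite_of_le {a n : ℕ} (h : a ≤ n) : a % n = if a < n then a else 0 := by
  split_ifs with ha
  · exact Nat.mod_eq_of_lt ha
  · rw [show a = n by omega, Nat.mod_self]

lemma skip2_cycSucc (hk : 3 ≤ k) (hm : m + 1 < k) (j : Fin (k - 2)) :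
    skip2 m (cycSucc j) = cycSucc (skip2 m j) ∨
      (skip2 m (cycSucc j) = ⟨(m + 2) % k, Nat.mod_lt _ (by omega)⟩ ∧
        cycSucc (skip2 m j) = ⟨m, Nat.lt_of_succ_lt hm⟩) := by
  have hj := j.isLt
  have hs : (skip2 (k := k) m j).val + 1 ≤ k := by rw [skip2_val]; split_ifs <;> omega
  simp only [Fin.ext_iff, skip2_val, cycSucc, cycAdd] at hs ⊢
  rw [mod_eq_ite_of_le (n := k - 2) (by omega), mod_eq_ite_of_le hs,
    mod_eq_ite_of_le (a := m + 2) (by omega)]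
  split_ifs <;> omega

lemma pair_skip2_ne {p : Fin k → Fin k} (hinv : ∀ t, p (p t) = t) (hm : m + 1 < k)
    (hb : p ⟨m, Nat.lt_of_succ_lt hm⟩ = ⟨m + 1, hm⟩) (j : Fin (k - 2)) :
    (p (skip2 m j)).val ≠ m ∧ (p (skip2 m j)).val ≠ m + 1 := by
  have hj := skip2_val_ne (k := k) (m := m) j
  constructor <;> intro h
  · have := hinv (skip2 m j)
    rw [show p (skip2 m j) = ⟨m, Nat.lt_of_succ_lt hm⟩ from Fin.ext h, hb] at this
    exact hj.2 (congrArg Fin.val this).symm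
  · have := hinv (skip2 m j)
    rw [show p (skip2 m j) = ⟨m + 1, hm⟩ from Fin.ext h, ← hb, hinv] at this
    exact hj.1 (congrArg Fin.val this).symm

lemma skip2_delPairFun {p : Fin k → Fin k} (hinv : ∀ t, p (p t) = t) (hm : m + 1 < k)
    (hb : p ⟨m, Nat.lt_of_succ_lt hm⟩ = ⟨m + 1, hm⟩) (j : Fin (k - 2)) :
    skip2 m (delPairFun p m j) = p (skip2 m j) := by
  have hp := pair_skip2_ne hinv hm hb j
  have := (p (skip2 m j)).isLt
  have hlt : (if (p (skip2 m j)).val < m then (p (skip2 m j)).val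
      else (p (skip2 m j)).val - 2) < k - 2 := by split_ifs <;> omega
  apply Fin.ext
  simp only [skip2_val, delPairFun, Nat.mod_eq_of_lt hlt]
  split_ifs <;> omega

lemma mem_PinvPair_delPairFun {N : ℕ} {E : Fin N × Fin N → Fin N × Fin N → Prop}
    {p : Fin k → Fin k} (hinv : ∀ t, p (p t) = t) (hk : 3 ≤ k) (hm : m + 1 < k)
    (hb : p ⟨m, Nat.lt_of_succ_lt hm⟩ = ⟨m + 1, hm⟩) {i : Fin k → Fin N}
    (hi : i ∈ PinvPair E p)
    (heq : i ⟨(m + 2) % k, Nat.mod_lt _ (by omega)⟩ = i ⟨m, Nat.lt_of_succ_lt hm⟩) :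
    (fun j => i (skip2 m j)) ∈ PinvPair E (delPairFun p m) := by
  have hsucc : ∀ j : Fin (k - 2), i (skip2 m (cycSucc j)) = i (cycSucc (skip2 m j)) := by
    intro j
    rcases skip2_cycSucc hk hm j with h | ⟨h₁, h₂⟩
    · rw [h]
    · rw [h₁, h₂, heq]
  intro l l'
  dsimp only
  rw [hsucc, hsucc, hi, ← skip2_delPairFun hinv hm hb, skip2_injective.eq_iff,
    skip2_injective.eq_iff]

end Deletion

section LeafRemoval

variable {k N : ℕ} {E : Fin N × Fin N → Fin N × Fin N → Prop} {p : Fin k → Fin k}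

lemma card_filter_PinvPair_eq_le (hinv : ∀ t, p (p t) = t) (hk : 3 ≤ k) {m : ℕ}
    (hm : m + 1 < k) (hb : p ⟨m, Nat.lt_of_succ_lt hm⟩ = ⟨m + 1, hm⟩) :
    #{i ∈ (PinvPair E p).toFinset |
        i ⟨(m + 2) % k, Nat.mod_lt _ (by omega)⟩ = i ⟨m, Nat.lt_of_succ_lt hm⟩} ≤
      N * (PinvPair E (delPairFun p m)).ncard := by
  set a₂ : Fin k := ⟨(m + 2) % k, Nat.mod_lt _ (by omega)⟩
  have hskip : ∀ t : Fin k, t.val ≠ m → t.val ≠ m + 1 → ∃ j, skip2 m j = t :=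
    exists_skip2_eq hm
  have ha₂ : a₂.val = if m + 2 < k then m + 2 else 0 := mod_eq_ite_of_le (by omega)
  obtain ⟨j₂, hj₂⟩ := hskip a₂ (by rw [ha₂]; split_ifs <;> omega)
    (by rw [ha₂]; split_ifs <;> omega)
  rw [Set.ncard_eq_toFinset_card']
  calc _ ≤ #((univ : Finset (Fin N)) ×ˢ (PinvPair E (delPairFun p m)).toFinset) := ?_
    _ = N * _ := by rw [card_product, card_univ, Fintype.card_fin]
  refine card_le_card_of_injOn (fun i => (i ⟨m + 1, hm⟩, fun j => i (skip2 m j))) ?_ ?_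
  · intro i hi
    simp only [coe_filter, Set.mem_toFinset, Set.mem_ofPred_eq] at hi
    simp only [coe_product, Set.mem_prod, coe_univ, Set.mem_univ, true_and, mem_coe,
      Set.mem_toFinset]
    exact mem_PinvPair_delPairFun hinv hk hm hb hi.1 hi.2
  · intro i hi i' hi' h
    simp only [coe_filter, Set.mem_toFinset, Set.mem_ofPred_eq] at hi hi'
    simp only [Prod.mk.injEq, funext_iff] at h
    funext t
    by_cases h0 : t.val = m
    · rw [show t = ⟨m, Nat.lt_of_succ_lt hm⟩ from Fin.ext h0, ← hi.2, ← hi'.2, ← hj₂,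
        h.2]
    by_cases h1 : t.val = m + 1
    · rw [show t = ⟨m + 1, hm⟩ from Fin.ext h1, h.1]
    obtain ⟨j, rfl⟩ := hskip t h0 h1
    exact h.2 j

lemma card_filter_PinvPair_ne_le (hinv : ∀ t, p (p t) = t) (hne : ∀ t, p t ≠ t)
    (hk : 3 ≤ k) {B : ℕ} (hB : 1 ≤ B) (hC2 : cond2 E B) {M : Fin k} (hM : p M = cycAdd M 1) :
    #{i ∈ (PinvPair E p).toFinset | i (cycAdd M 2) ≠ i M} ≤
      B ^ k * N ^ (k / 2 - 1) * cond3Count E := by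
  have hrel : ∀ i ∈ PinvPair E p, ∀ l, E (i l, i (cycSucc l)) (i (p l), i (cycSucc (p l))) :=
    fun i hi l => (hi l (p l)).2 (Or.inr rfl)
  rw [cond3Count, Set.ncard_eq_toFinset_card', Set.toFinset_ofPred]
  refine card_le_mul_card_image_of_maps_to
    (f := fun i => (i M, i (cycAdd M 1), i (cycAdd M 2))) ?_ _ ?_
  · intro i hi
    simp only [mem_filter, Set.mem_toFinset, mem_univ, true_and] at hi ⊢
    have := hrel i hi.1 M
    rw [hM, cycSucc_cycAdd] at this
    exact ⟨by simpa only [cycSucc, cycAdd_zero] using this, hi.2⟩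
  · rintro ⟨x, y, z⟩ -
    refine le_trans (card_le_card fun i hi => ?_)
      (card_filter_pairing_le hk hB hC2 hinv hne hM x y z)
    simp only [mem_filter, Set.mem_toFinset, mem_univ, true_and, Prod.mk.injEq] at hi ⊢
    exact ⟨hrel i hi.1.1, hi.2⟩

lemma ncard_PinvPair_le (hk : 3 ≤ k) {B : ℕ} (hB : 1 ≤ B) (hC2 : cond2 E B)
    (π : PairPartition k) {m : ℕ} (hm : m + 1 < k)
    (hb : π.pair ⟨m, Nat.lt_of_succ_lt hm⟩ = ⟨m + 1, hm⟩) :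
    (PinvPair E π.pair).ncard ≤
      N * (PinvPair E (delPairFun π.pair m)).ncard + B ^ k * N ^ (k / 2 - 1) * cond3Count E := by
  set M : Fin k := ⟨m, Nat.lt_of_succ_lt hm⟩
  have hM1 : cycAdd M 1 = ⟨m + 1, hm⟩ := Fin.ext (Nat.mod_eq_of_lt hm)
  rw [Set.ncard_eq_toFinset_card', ← card_filter_add_card_filter_not
    (fun i => i (cycAdd M 2) = i M)]
  exact add_le_add (card_filter_PinvPair_eq_le π.involutive hk hm hb)
    (card_filter_PinvPair_ne_le π.involutive π.pair_ne hk hB hC2 (hb.trans hM1.symm))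

end LeafRemoval

lemma isLittleO_const_mul_pow_mul {f : ℕ → ℝ} (hf : f =o[atTop] fun N => (N : ℝ) ^ 2)
    (C : ℝ) (a : ℕ) :
    (fun N : ℕ => C * (N : ℝ) ^ a * f N) =o[atTop] fun N => (N : ℝ) ^ (a + 2) := by
  have := (isBigO_refl (fun N : ℕ => (N : ℝ) ^ a) atTop).mul_isLittleO (hf.const_mul_left C)
  exact this.congr (fun N => by ring) (fun N => by ring)

/-- If a pair-partition `π` of `{1,…,k}` (`k ≥ 4` even) contains a
block `{m, m+1}`, then `#P_N^{-1}(π) ≤ N · #P_N^{-1}(π̃) + o(N^{1+k/2})`, where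
`π̃ = π ∖• {m, m+1}`. -/
theorem Pinv_card_leaf_removal (k : ℕ) (hk4 : 4 ≤ k)
    (E : (N : ℕ) → (Fin N × Fin N → Fin N × Fin N → Prop))
    (B : ℕ) (hB : 1 ≤ B) (hC2 : ∀ N, cond2 (E N) B)
    (hC3 : (fun N => (cond3Count (E N) : ℝ)) =o[Filter.atTop] fun N => (N : ℝ) ^ 2)
    (π : PairPartition k) (m : ℕ) (hm : m + 1 < k)
    (hb : (π.pair ⟨m, by omega⟩).val = m + 1) :
    ∃ err : ℕ → ℝ,
      err =o[Filter.atTop] (fun N => (N : ℝ) ^ (1 + k / 2)) ∧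
      ∀ N : ℕ, ((PinvPair (E N) π.pair).ncard : ℝ) ≤
        N * ((PinvPair (E N) (delPairFun π.pair m)).ncard : ℝ) + err N := by
  refine ⟨fun N => (B : ℝ) ^ k * (N : ℝ) ^ (k / 2 - 1) * cond3Count (E N), ?_, fun N => ?_⟩
  · rw [show 1 + k / 2 = k / 2 - 1 + 2 by omega]
    exact isLittleO_const_mul_pow_mul hC3 _ _
  · have := ncard_PinvPair_le (by omega) hB (hC2 N) π hm (Fin.ext hb)
    beta_reduce
    exact_mod_cast this
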